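/- arXiv:1704.04470 — 4 statements merged into one kernel-verified Lean document; each statement's English description precedes it below -/
import Mathlib

section
/- Let K, b be positive integers. For each arm j ∈ {1,...,K}, let p_j ∈ (0,1] and q_j^1, ..., q_j^b ∈ [0,1] with each factor 1 - (1-p_j)(1-q_j^1)···(1-q_j^b) positive. Then ∑_{j=1}^K p_j / (1 - (1-p_j)(1-q_j^1)···(1-q_j^b)) ≤ ∑_{j=1}^K p_j / (p_j + q_j^1 + ··· + q_j^b) + 1. -/
/-!
Write `S_j = p_j + ∑_ℓ q_j^ℓ`. Since `1 - x ≤ e^{-x}`, the probability that nobody selects arm `j`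
is at most `e^{-S_j} ≤ 1 / (1 + S_j)`, so `1 - (1 - p_j) ∏_ℓ (1 - q_j^ℓ) ≥ S_j / (1 + S_j)` and each
summand on the left is at most `p_j (1 + S_j) / S_j = p_j / S_j + p_j`; sum over `j` and use
`∑_j p_j = 1`.
-/

open Finset Real

lemma prod_one_sub_le_exp_neg_sum {ι : Type*} (s : Finset ι) {f : ι → ℝ}
    (hf : ∀ i ∈ s, f i ≤ 1) : ∏ i ∈ s, (1 - f i) ≤ exp (-∑ i ∈ s, f i) := by
  rw [← sum_neg_distrib, exp_sum]
  exact prod_le_prod (fun i hi => sub_nonneg.2 (hf i hi)) fun i _ => one_sub_le_exp_neg _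

lemma div_one_add_le_one_sub_exp_neg {x : ℝ} (hx : -1 < x) : x / (1 + x) ≤ 1 - exp (-x) := by
  have hx' : 0 < 1 + x := by linarith
  have h : exp (-x) ≤ (1 + x)⁻¹ := by
    rw [exp_neg]
    exact inv_anti₀ hx' (by linarith [add_one_le_exp x])
  have h' : x / (1 + x) = 1 - (1 + x)⁻¹ := by field_simp; ring
  linarith

lemma div_one_add_le_one_sub_mul_prod_one_sub {ι : Type*} [Fintype ι] {p : ℝ} {q : ι → ℝ}
    (hq : ∀ i, q i ≤ 1) (hS : -1 < p + ∑ i, q i) :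
    (p + ∑ i, q i) / (1 + (p + ∑ i, q i)) ≤ 1 - (1 - p) * ∏ i, (1 - q i) := by
  have hprod : (1 - p) * ∏ i, (1 - q i) ≤ exp (-(p + ∑ i, q i)) := by
    rw [neg_add, exp_add]
    exact mul_le_mul (one_sub_le_exp_neg p) (prod_one_sub_le_exp_neg_sum _ fun i _ => hq i)
      (prod_nonneg fun i _ => sub_nonneg.2 (hq i)) (exp_nonneg _)
  linarith [div_one_add_le_one_sub_exp_neg hS]

lemma div_le_div_add_self_of_div_one_add_le {p S D : ℝ} (hp : 0 ≤ p) (hS : 0 < S)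
    (hD : S / (1 + S) ≤ D) : p / D ≤ p / S + p :=
  calc p / D ≤ p / (S / (1 + S)) := div_le_div_of_nonneg_left hp (by positivity) hD
    _ = p / S + p := by field_simp

lemma div_one_sub_mul_prod_one_sub_le {ι : Type*} [Fintype ι] {p : ℝ} {q : ι → ℝ} (hp : 0 < p)
    (hq : ∀ i, q i ∈ Set.Icc (0 : ℝ) 1) :
    p / (1 - (1 - p) * ∏ i, (1 - q i)) ≤ p / (p + ∑ i, q i) + p := by
  have hS : 0 < p + ∑ i, q i := add_pos_of_pos_of_nonneg hp (sum_nonneg fun i _ => (hq i).1)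
  exact div_le_div_add_self_of_div_one_add_le hp.le hS
    (div_one_add_le_one_sub_mul_prod_one_sub (fun i => (hq i).2) (by linarith))

theorem sum_ratio_le_sum_ratio_add_one_general (K b : ℕ)
    (p : Fin K → ℝ) (q : Fin b → Fin K → ℝ)
    (hp : ∀ j, p j ∈ Set.Ioc (0 : ℝ) 1) (hpsum : ∑ j, p j = 1)
    (hq : ∀ ℓ j, q ℓ j ∈ Set.Icc (0 : ℝ) 1) :
    ∑ j, p j / (1 - (1 - p j) * ∏ ℓ, (1 - q ℓ j)) ≤
      ∑ j, p j / (p j + ∑ ℓ, q ℓ j) + 1 :=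
  calc ∑ j, p j / (1 - (1 - p j) * ∏ ℓ, (1 - q ℓ j))
      ≤ ∑ j, (p j / (p j + ∑ ℓ, q ℓ j) + p j) :=
        sum_le_sum fun j _ => div_one_sub_mul_prod_one_sub_le (hp j).1 fun ℓ => hq ℓ j
    _ = ∑ j, p j / (p j + ∑ ℓ, q ℓ j) + 1 := by rw [sum_add_distrib, hpsum]

theorem sum_ratio_le_sum_ratio_add_one (K b : ℕ) (hK : 0 < K) (hb : 0 < b)
    (p : Fin K → ℝ) (q : Fin b → Fin K → ℝ)
    (hp : ∀ j, p j ∈ Set.Ioc (0 : ℝ) 1) (hpsum : ∑ j, p j = 1)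
    (hq : ∀ ℓ j, q ℓ j ∈ Set.Icc (0 : ℝ) 1) (hqsum : ∀ ℓ, ∑ j, q ℓ j = 1)
    (hpos : ∀ j, 0 < 1 - (1 - p j) * ∏ ℓ, (1 - q ℓ j)) :
    ∑ j, p j / (1 - (1 - p j) * ∏ ℓ, (1 - q ℓ j)) ≤
      ∑ j, p j / (p j + ∑ ℓ, q ℓ j) + 1 :=
  sum_ratio_le_sum_ratio_add_one_general K b p q hp hpsum hq
end

section
/- Let K ≥ 2 be an integer, η ∈ [0,1], and Θ ∈ [0,1). Suppose p = (p_1,...,p_K) is a probability distribution with p_j ∈ [η/K, 1-(K-1)η/K] for all j. Then ∑_{j=1}^K p_j / (1 - (1 - p_j)Θ) ≤ 1/(1 - (1 - 1/K)Θ) + 1. -/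
/-!
The map `x ↦ x / (1 - (1 - x) Θ)` is concave on `x ≥ 0`, so it lies below its tangent line at
`1 / K`. Summing the tangent bounds over a probability vector cancels the linear terms and leaves
`K · (1/K) / (1 - (1 - 1/K) Θ) = 1 / (1 - (1 - 1/K) Θ)`.
-/

open Finset

lemma one_sub_one_sub_mul_pos {x Θ : ℝ} (hx : 0 ≤ x) (hΘ0 : 0 ≤ Θ) (hΘ1 : Θ < 1) :
    0 < 1 - (1 - x) * Θ := by
  nlinarith

lemma div_one_sub_one_sub_mul_le_tangent {Θ a x : ℝ} (hΘ0 : 0 ≤ Θ) (hΘ1 : Θ ≤ 1)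
    (ha : 0 < 1 - (1 - a) * Θ) (hx : 0 < 1 - (1 - x) * Θ) :
    x / (1 - (1 - x) * Θ) ≤
      a / (1 - (1 - a) * Θ) + (1 - Θ) / (1 - (1 - a) * Θ) ^ 2 * (x - a) := by
  set D := 1 - (1 - a) * Θ
  have hrhs : a / D + (1 - Θ) / D ^ 2 * (x - a) = (a * D + (1 - Θ) * (x - a)) / D ^ 2 := by
    field_simp
  -- The gap between tangent line and function, cleared of denominators, is a perfect square.
  have hgap : (a * D + (1 - Θ) * (x - a)) * (1 - (1 - x) * Θ) - x * D ^ 2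
      = Θ * (1 - Θ) * (x - a) ^ 2 := by
    ring
  rw [hrhs, div_le_div_iff₀ hx (by positivity)]
  nlinarith [mul_nonneg (mul_nonneg hΘ0 (sub_nonneg.2 hΘ1)) (sq_nonneg (x - a))]

lemma sum_le_card_mul_of_le_tangent {ι : Type*} [Fintype ι] (f : ℝ → ℝ) (c : ℝ) (p : ι → ℝ)
    (hp : ∑ i, p i = 1)
    (htan : ∀ i, f (p i) ≤ f (1 / Fintype.card ι) + c * (p i - 1 / Fintype.card ι)) :
    ∑ i, f (p i) ≤ Fintype.card ι * f (1 / Fintype.card ι) := by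
  have hne : Nonempty ι := by
    by_contra h
    rw [not_nonempty_iff] at h
    simp at hp
  have hcard : (Fintype.card ι : ℝ) ≠ 0 := by exact_mod_cast Fintype.card_ne_zero
  calc ∑ i, f (p i)
      ≤ ∑ i, (f (1 / Fintype.card ι) + c * (p i - 1 / Fintype.card ι)) := sum_le_sum fun i _ => htan i
    _ = Fintype.card ι * f (1 / Fintype.card ι) := by
      rw [sum_add_distrib, ← mul_sum, sum_sub_distrib, hp]
      simp only [sum_const, card_univ, nsmul_eq_mul]
      field_simp
      ring

theorem sum_ratio_theta_bound_general (K : ℕ) (η Θ : ℝ)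
    (hη : η ∈ Set.Icc (0 : ℝ) 1) (hΘ : Θ ∈ Set.Ico (0 : ℝ) 1)
    (p : Fin K → ℝ) (hpsum : ∑ j, p j = 1)
    (hp : ∀ j, p j ∈ Set.Icc (η / K) (1 - (K - 1) * η / K)) :
    ∑ j, p j / (1 - (1 - p j) * Θ) ≤ 1 / (1 - (1 - 1 / K) * Θ) + 1 := by
  obtain ⟨hΘ0, hΘ1⟩ := hΘ
  have hp0 (j : Fin K) : 0 ≤ p j := (div_nonneg hη.1 K.cast_nonneg).trans (hp j).1
  have hD : 0 < 1 - (1 - 1 / (K : ℝ)) * Θ :=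
    one_sub_one_sub_mul_pos (by positivity) hΘ0 hΘ1
  have hsum := sum_le_card_mul_of_le_tangent (fun x => x / (1 - (1 - x) * Θ)) _ p hpsum
    fun j => by
      simpa only [Fintype.card_fin] using div_one_sub_one_sub_mul_le_tangent hΘ0 hΘ1.le hD
        (one_sub_one_sub_mul_pos (hp0 j) hΘ0 hΘ1)
  have hK : (K : ℝ) ≠ 0 := by
    rintro hK
    obtain rfl := Nat.cast_eq_zero.1 hK
    simp at hpsum
  rw [Fintype.card_fin, ← mul_div_assoc, mul_one_div_cancel hK] at hsum
  linarith

theorem sum_ratio_theta_bound (K : ℕ) (hK : 2 ≤ K) (η Θ : ℝ)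
    (hη : η ∈ Set.Icc (0 : ℝ) 1) (hΘ : Θ ∈ Set.Ico (0 : ℝ) 1)
    (p : Fin K → ℝ) (hpsum : ∑ j, p j = 1)
    (hp : ∀ j, p j ∈ Set.Icc (η / K) (1 - (K - 1) * η / K)) :
    ∑ j, p j / (1 - (1 - p j) * Θ) ≤ 1 / (1 - (1 - 1 / K) * Θ) + 1 :=
  sum_ratio_theta_bound_general K η Θ hη hΘ p hpsum hp
end

section
/- Fix positive constants p_j(t) for j ∈ {1,...,K}, t ∈ {1,...,T}. The function φ(x) = sqrt(∑_{t=1}^T ∑_{j=1}^K p_j(t) / (p_j(t) + ∑_{ℓ=1}^b x_j^ℓ(t))) is convex on the domain of nonnegative vectors x = (x_j^ℓ(t)) for which all denominators are positive. -/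
/-!
The map `x ↦ (p_j(t) + ∑_ℓ x_j^ℓ(t))_{t,j}` is affine, and `φ` is its composition with
`F s = √(∑ i, p i / s i)` on the positive orthant. `F s` is the Euclidean norm of the vector
`(√(p i) / √(s i))_i`, whose entries are nonnegative convex functions of `s` (`v ↦ v⁻¹` is convex
and decreasing, `√` is concave); the Euclidean norm is convex and monotone on nonnegative vectors,
so `F` is convex.
-/

open Real Set

lemma Real.sqrt_image_Ioi_zero : Real.sqrt '' Ioi 0 = Ioi 0 := by
  ext y
  constructor
  · rintro ⟨x, hx, rfl⟩
    exact Real.sqrt_pos.2 hx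
  · intro hy
    exact ⟨y ^ 2, mem_Ioi.2 (pow_pos hy 2), Real.sqrt_sq hy.le⟩

lemma convexOn_inv_sqrt : ConvexOn ℝ (Ioi 0) fun x : ℝ ↦ (√x)⁻¹ := by
  have hsqrt : ConcaveOn ℝ (Ioi 0) (√·) :=
    strictConcaveOn_sqrt.concaveOn.subset Ioi_subset_Ici_self (convex_Ioi 0)
  refine ConvexOn.comp_concaveOn (g := fun y : ℝ ↦ y⁻¹) ?_ hsqrt ?_ <;> rw [sqrt_image_Ioi_zero]
  · simpa using convexOn_zpow (𝕜 := ℝ) (-1)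
  · exact antitoneOn_inv_pos

lemma ConvexOn.sqrt_sum_sq {ι E : Type*} [Fintype ι] [AddCommGroup E] [Module ℝ E]
    {s : Set E} {f : ι → E → ℝ} (hs : Convex ℝ s) (hf : ∀ i, ConvexOn ℝ s (f i))
    (hf₀ : ∀ i, ∀ x ∈ s, 0 ≤ f i x) :
    ConvexOn ℝ s fun x ↦ √(∑ i, f i x ^ 2) := by
  refine ⟨hs, fun x hx y hy a b ha hb hab ↦ ?_⟩
  let vec (z : E) : EuclideanSpace ℝ ι := WithLp.toLp 2 fun i ↦ f i z
  have norm_vec (z : E) : ‖vec z‖ = √(∑ i, f i z ^ 2) := by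
    simp [vec, EuclideanSpace.norm_eq]
  calc √(∑ i, f i (a • x + b • y) ^ 2)
      ≤ √(∑ i, (a * f i x + b * f i y) ^ 2) := by
        gcongr with i
        · exact hf₀ i _ (hs hx hy ha hb hab)
        · exact (hf i).2 hx hy ha hb hab
    _ = ‖a • vec x + b • vec y‖ := by simp [vec, EuclideanSpace.norm_eq]
    _ ≤ a * ‖vec x‖ + b * ‖vec y‖ := by
        refine (norm_add_le _ _).trans_eq ?_
        rw [norm_smul, norm_smul, Real.norm_of_nonneg ha, Real.norm_of_nonneg hb]
    _ = a • √(∑ i, f i x ^ 2) + b • √(∑ i, f i y ^ 2) := by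
        rw [norm_vec, norm_vec, smul_eq_mul, smul_eq_mul]

lemma convexOn_sqrt_sum_div {ι : Type*} [Fintype ι] {p : ι → ℝ} (hp : ∀ i, 0 ≤ p i) :
    ConvexOn ℝ {s : ι → ℝ | ∀ i, 0 < s i} fun s ↦ √(∑ i, p i / s i) := by
  have horthant : Convex ℝ {s : ι → ℝ | ∀ i, 0 < s i} :=
    fun _ hx _ hy _ _ ha hb hab i ↦ convex_Ioi (0 : ℝ) (hx i) (hy i) ha hb hab
  have hterm (i : ι) :
      ConvexOn ℝ {s | ∀ i, 0 < s i} fun s : ι → ℝ ↦ √(p i) * (√(s i))⁻¹ := by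
    refine ((convexOn_inv_sqrt.smul (sqrt_nonneg (p i))).comp_linearMap
      (LinearMap.proj i)).subset ?_ horthant
    exact fun s hs ↦ hs i
  refine (ConvexOn.sqrt_sum_sq horthant hterm fun i s _ ↦ by positivity).congr fun s hs ↦ ?_
  simp only [mul_pow, sq_sqrt (hp _), inv_pow, sq_sqrt (hs _).le, div_eq_mul_inv]

theorem phi_convex_general (K T b : ℕ)
    (p : Fin T → Fin K → ℝ) (hp : ∀ t j, 0 < p t j) :
    ConvexOn ℝ
      {x : Fin T → Fin K → Fin b → ℝ |
        (∀ t j ℓ, 0 ≤ x t j ℓ) ∧ ∀ t j, 0 < p t j + ∑ ℓ, x t j ℓ}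
      (fun x => Real.sqrt (∑ t, ∑ j, p t j / (p t j + ∑ ℓ, x t j ℓ))) := by
  let A : (Fin T → Fin K → Fin b → ℝ) →ᵃ[ℝ] (Fin T × Fin K → ℝ) :=
    AffineMap.const ℝ _ (fun i ↦ p i.1 i.2) +
      (LinearMap.pi fun i : Fin T × Fin K ↦
        ∑ ℓ, LinearMap.proj ℓ ∘ₗ LinearMap.proj i.2 ∘ₗ LinearMap.proj i.1).toAffineMap
  have hA (x) (i : Fin T × Fin K) : A x i = p i.1 i.2 + ∑ ℓ, x i.1 i.2 ℓ := by
    simp [A]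
  have hS : {x : Fin T → Fin K → Fin b → ℝ |
        (∀ t j ℓ, 0 ≤ x t j ℓ) ∧ ∀ t j, 0 < p t j + ∑ ℓ, x t j ℓ} =
      Ici 0 ∩ A ⁻¹' {s | ∀ i, 0 < s i} := by
    ext x
    simp [hA, Prod.forall, Pi.le_def]
  have hφ := (convexOn_sqrt_sum_div fun i ↦ (hp i.1 i.2).le).comp_affineMap A
  rw [hS]
  refine (hφ.subset inter_subset_right ((convex_Ici 0).inter hφ.1)).congr fun x _ ↦ ?_
  simp [hA, Fintype.sum_prod_type]

theorem phi_convex (K T b : ℕ) (hK : 0 < K) (hT : 0 < T) (hb : 0 < b)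
    (p : Fin T → Fin K → ℝ) (hp : ∀ t j, 0 < p t j) :
    ConvexOn ℝ
      {x : Fin T → Fin K → Fin b → ℝ |
        (∀ t j ℓ, 0 ≤ x t j ℓ) ∧ ∀ t j, 0 < p t j + ∑ ℓ, x t j ℓ}
      (fun x => Real.sqrt (∑ t, ∑ j, p t j / (p t j + ∑ ℓ, x t j ℓ))) :=
  phi_convex_general K T b p hp
end

section
/- Suppose at time t arm i is selected by the UCB rule, i.e., μ̂_{i,n_i(t-1)} + sqrt(α ln t / (2 n_i(t-1))) ≥ μ̂_{i*,n_{i*}(t-1)} + sqrt(α ln t / (2 n_{i*}(t-1))). Then at least one of the following holds: (a) μ̂_{i*,n_{i*}(t-1)} + sqrt(α ln t / (2 n_{i*}(t-1))) ≤ μ*, (b) μ̂_{i,n_i(t-1)} > μ_i + sqrt(α ln t / (2 n_i(t-1))), or (c) n_i(t-1) < 2α ln t / Δ_i². -/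
theorem ucb_trichotomy (α t : ℝ) (hα : 0 < α) (ht : 2 ≤ t)
    (μi μstar Δ : ℝ) (hΔ : Δ = μstar - μi) (hΔpos : 0 < Δ)
    (ni nstar : ℝ) (hni : 1 ≤ ni) (hnstar : 1 ≤ nstar)
    (μhati μhatstar : ℝ)
    (hsel : μhatstar + Real.sqrt (α * Real.log t / (2 * nstar)) ≤
            μhati + Real.sqrt (α * Real.log t / (2 * ni))) :
    μhatstar + Real.sqrt (α * Real.log t / (2 * nstar)) ≤ μstar ∨
    μhati > μi + Real.sqrt (α * Real.log t / (2 * ni)) ∨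
    ni < 2 * α * Real.log t / Δ ^ 2 := by
  by_contra h
  push_neg at h
  obtain ⟨ha, hb, hc⟩ := h
  have hlog : 0 ≤ Real.log t := Real.log_nonneg (by linarith)
  have hni0 : (0:ℝ) < ni := by linarith
  have hc' : 2 * α * Real.log t / Δ ^ 2 ≤ ni := hc
  have hkey : α * Real.log t / (2 * ni) ≤ (Δ / 2) ^ 2 := by
    rw [div_le_iff₀ (by positivity)]
    have := (div_le_iff₀ (by positivity : (0:ℝ) < Δ ^ 2)).mp hc'
    nlinarith
  have hs : Real.sqrt (α * Real.log t / (2 * ni)) ≤ Δ / 2 := by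
    calc Real.sqrt (α * Real.log t / (2 * ni)) ≤ Real.sqrt ((Δ / 2) ^ 2) :=
          Real.sqrt_le_sqrt hkey
      _ = Δ / 2 := by rw [Real.sqrt_sq (by linarith)]
  linarith
end
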